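/- arXiv:1512.07580 — 2 statements merged into one kernel-verified Lean document; each statement's English description precedes it below -/
import Mathlib

section
/- Let L : D ⇄ C : R be an adjunction with counit ε, and (E,F) a factorisation system on D such that RL sends F to F and R(ε_X) ∈ F for all X; let D̃ ⊆ C be the full subcategory spanned by objects isomorphic to L(A), Ẽ the class of morphisms of D̃ isomorphic in the arrow category to some L(e) with e ∈ E, and R^{-1}F the class of all morphisms f of C with R(f) ∈ F. Then: (a) every morphism of C whose domain lies in D̃ factors as a morphism of Ẽ followed by a morphism of R^{-1}F, and Ẽ is orthogonal to R^{-1}F; (b) the inclusion of Ar^Ẽ(D̃) (the full subcategory of the arrow category of C spanned by morphisms in Ẽ) into D̃↓C (the full subcategory of the arrow category of C spanned by morphisms with domain in D̃) admits a right adjoint, sending a morphism to its Ẽ-factor; and (c) this right adjoint sends morphisms that are cartesian for the domain projection D̃↓C → D̃ (commutative squares with invertible bottom edge) to morphisms that are cartesian for the domain projection Ar^Ẽ(D̃) → D̃. -/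
open CategoryTheory

namespace DS3

universe v u v' u' v₂ u₂

variable {D : Type u} [Category.{v} D]

structure FactorisationSystem (D : Type u) [Category.{v} D] where
  E : MorphismProperty D
  F : MorphismProperty D
  E_comp_iso : ∀ {X Y Z : D} (e : X ⟶ Y) (i : Y ⟶ Z), IsIso i → E e → E (e ≫ i)
  E_iso_comp : ∀ {X Y Z : D} (i : X ⟶ Y) (e : Y ⟶ Z), IsIso i → E e → E (i ≫ e)
  F_comp_iso : ∀ {X Y Z : D} (f : X ⟶ Y) (i : Y ⟶ Z), IsIso i → F f → F (f ≫ i)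
  F_iso_comp : ∀ {X Y Z : D} (i : X ⟶ Y) (f : Y ⟶ Z), IsIso i → F f → F (i ≫ f)
  orth : ∀ {A B X Y : D} (e : A ⟶ B) (f : X ⟶ Y), E e → F f →
    ∀ (u : A ⟶ X) (v : B ⟶ Y), u ≫ f = e ≫ v →
      ∃! d : B ⟶ X, e ≫ d = u ∧ d ≫ f = v
  fact : ∀ {X Y : D} (h : X ⟶ Y), ∃ (Z : D) (e : X ⟶ Z) (f : Z ⟶ Y), E e ∧ F f ∧ e ≫ f = h

/-- A morphism `ψ : c' ⟶ c` is *cartesian* with respect to a functor `p`. -/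
def IsCartesianArrow {C : Type u'} [Category.{v'} C] {D' : Type u₂} [Category.{v₂} D']
    (p : C ⥤ D') {c' c : C} (ψ : c' ⟶ c) : Prop :=
  ∀ (c'' : C) (χ : c'' ⟶ c) (g : p.obj c'' ⟶ p.obj c'),
    g ≫ p.map ψ = p.map χ →
    ∃! θ : c'' ⟶ c', θ ≫ ψ = χ ∧ p.map θ = g

variable {C : Type u₂} [Category.{v₂} C]

/-- Membership of the full subcategory `D̃ ⊆ C`. -/
def inTildeD (L : D ⥤ C) (X : C) : Prop := ∃ A : D, Nonempty (L.obj A ≅ X)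

/-- The class `Ẽ`: morphisms of `C` isomorphic in the arrow category to some `L e`, `e ∈ E`. -/
def isTildeE (L : D ⥤ C) (fs : FactorisationSystem D) {X Y : C} (g : X ⟶ Y) : Prop :=
  ∃ (A B : D) (e : A ⟶ B), fs.E e ∧ Nonempty (Arrow.mk (L.map e) ≅ Arrow.mk g)

/-- The category `D̃ ⊆ C` as a full subcategory. -/
abbrev TildeD (L : D ⥤ C) := ObjectProperty.FullSubcategory (inTildeD L)

/-- `Ar^Ẽ(D̃)`: the full subcategory of `Ar(C)` spanned by the `Ẽ`-morphisms of `D̃`. -/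
abbrev ArEt (L : D ⥤ C) (fs : FactorisationSystem D) :=
  ObjectProperty.FullSubcategory (fun φ : Arrow C =>
    inTildeD L φ.left ∧ inTildeD L φ.right ∧ isTildeE L fs φ.hom)

/-- `D̃↓C`: the full subcategory of `Ar(C)` spanned by morphisms whose domain lies in `D̃`. -/
abbrev DdownC (L : D ⥤ C) := ObjectProperty.FullSubcategory (fun φ : Arrow C => inTildeD L φ.left)

/-- The inclusion `Ar^Ẽ(D̃) ↪ D̃↓C`. -/
def inclArE (L : D ⥤ C) (fs : FactorisationSystem D) : ArEt L fs ⥤ DdownC L :=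
  ObjectProperty.ιOfLE (fun _ h => h.1)

/-- The domain projection `Ar^Ẽ(D̃) ⥤ D̃`. -/
def domProjArE (L : D ⥤ C) (fs : FactorisationSystem D) : ArEt L fs ⥤ TildeD L where
  obj φ := ⟨φ.obj.left, φ.property.1⟩
  map ψ := ObjectProperty.homMk (CommaMorphism.left ψ.hom)

/-!
Transposition along `L ⊣ R` turns a lifting problem of `L e` against `f` into one of `e` against
`R f`, which is why `Ẽ` is orthogonal to `R⁻¹F`. For `σ : L A ≅ X`, factoring the transpose of
`σ.hom ≫ h` as `e ≫ f` in `D` gives `h = (σ.inv ≫ L e) ≫ (L f ≫ ε)`, and `R (L f ≫ ε)` lies in `F`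
because `F`, being the class right orthogonal to `E`, is closed under composition. The coreflector
sends an arrow to the `Ẽ`-part of a chosen such factorisation, with counit `(𝟙, f)`; since the
counit is the identity on domains, transposing along the coreflection reduces (c) to the fact that
a square with invertible codomain component is cartesian for the domain projection.
-/

def HasUniqueLifts {A B X Y : C} (e : A ⟶ B) (f : X ⟶ Y) : Prop :=
  ∀ (u : A ⟶ X) (v : B ⟶ Y), u ≫ f = e ≫ v → ∃! d : B ⟶ X, e ≫ d = u ∧ d ≫ f = v

namespace HasUniqueLifts

variable {A B X Y Z : C} {e : A ⟶ B}

lemma comp {f : X ⟶ Y} {g : Y ⟶ Z} (hf : HasUniqueLifts e f) (hg : HasUniqueLifts e g) :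
    HasUniqueLifts e (f ≫ g) := by
  intro u v sq
  obtain ⟨d₁, ⟨hd₁u, hd₁v⟩, hd₁⟩ := hg (u ≫ f) v (by rw [Category.assoc, sq])
  obtain ⟨d, ⟨hdu, hdd₁⟩, hd⟩ := hf u d₁ hd₁u.symm
  refine ⟨d, ⟨hdu, by rw [← Category.assoc, hdd₁, hd₁v]⟩, fun d' ⟨hd'u, hd'v⟩ => hd d' ⟨hd'u, ?_⟩⟩
  exact hd₁ (d' ≫ f) ⟨by rw [← Category.assoc, hd'u], by rw [Category.assoc, hd'v]⟩

lemma isIso_of_fac {f : A ⟶ Y} {f' : B ⟶ Y} (hf : HasUniqueLifts e f) (hf' : HasUniqueLifts e f')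
    (fac : e ≫ f' = f) : IsIso e := by
  obtain ⟨d, ⟨hed, hdf⟩, -⟩ := hf (𝟙 A) f' (by rw [Category.id_comp, fac])
  have hid := hf' e f' rfl
  refine ⟨d, hed, hid.unique (y₁ := d ≫ e) ⟨?_, ?_⟩ ⟨Category.comp_id e, Category.id_comp f'⟩⟩
  · rw [← Category.assoc, hed, Category.id_comp]
  · rw [Category.assoc, fac, hdf]

lemma of_arrowIso {A' B' : C} {e' : A' ⟶ B'} {f : X ⟶ Y} (ι : Arrow.mk e ≅ Arrow.mk e')
    (h : HasUniqueLifts e f) : HasUniqueLifts e' f := by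
  intro u v sq
  have hw : ι.hom.left ≫ e' = e ≫ ι.hom.right := Arrow.w ι.hom
  have key : ∀ d : B' ⟶ X, (e' ≫ d = u ∧ d ≫ f = v) ↔
      (e ≫ ι.hom.right ≫ d = ι.hom.left ≫ u ∧ (ι.hom.right ≫ d) ≫ f = ι.hom.right ≫ v) := by
    intro d
    rw [← Category.assoc, ← hw, Category.assoc, cancel_epi, Category.assoc, cancel_epi]
  refine (Equiv.existsUnique_congr (Arrow.rightFunc.mapIso ι).symm.homFromEquiv key
    (q := fun d => e ≫ d = ι.hom.left ≫ u ∧ d ≫ f = ι.hom.right ≫ v)).mpr ?_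
  exact h _ _ (by rw [Category.assoc, sq, ← Category.assoc, hw, Category.assoc])

end HasUniqueLifts

lemma FactorisationSystem.mem_F_iff (fs : FactorisationSystem D) {X Y : D} (f : X ⟶ Y) :
    fs.F f ↔ ∀ ⦃A B : D⦄ (e : A ⟶ B), fs.E e → HasUniqueLifts e f := by
  refine ⟨fun hf _ _ e he => fs.orth e f he hf, fun h => ?_⟩
  obtain ⟨Z, e, f', he, hf', rfl⟩ := fs.fact f
  have := (h e he).isIso_of_fac (fs.orth e f' he hf') rfl
  exact fs.F_iso_comp e f' this hf'

lemma FactorisationSystem.F_comp (fs : FactorisationSystem D) {X Y Z : D} {f : X ⟶ Y}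
    {g : Y ⟶ Z} (hf : fs.F f) (hg : fs.F g) : fs.F (f ≫ g) :=
  (fs.mem_F_iff _).2 fun _ _ e he => HasUniqueLifts.comp (fs.orth e f he hf) (fs.orth e g he hg)

lemma HasUniqueLifts.map_of_adjunction {L : D ⥤ C} {R : C ⥤ D} (adj : L ⊣ R) {A B : D}
    {e : A ⟶ B} {X Y : C} {f : X ⟶ Y} (h : HasUniqueLifts e (R.map f)) :
    HasUniqueLifts (L.map e) f := by
  intro u v sq
  have key : ∀ d : L.obj B ⟶ X, (L.map e ≫ d = u ∧ d ≫ f = v) ↔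
      (e ≫ adj.homEquiv _ _ d = adj.homEquiv _ _ u ∧
        adj.homEquiv _ _ d ≫ R.map f = adj.homEquiv _ _ v) := by
    intro d
    rw [← adj.homEquiv_naturality_left, ← adj.homEquiv_naturality_right,
      (adj.homEquiv _ _).apply_eq_iff_eq, (adj.homEquiv _ _).apply_eq_iff_eq]
  refine ((adj.homEquiv B X).existsUnique_congr key).mpr (h _ _ ?_)
  rw [← adj.homEquiv_naturality_right, sq, adj.homEquiv_naturality_left]

lemma inTildeD_of_isTildeE {L : D ⥤ C} {fs : FactorisationSystem D} {X Y : C} {g : X ⟶ Y}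
    (hg : isTildeE L fs g) : inTildeD L Y :=
  let ⟨_, B, _, _, ⟨ι⟩⟩ := hg
  ⟨B, ⟨Arrow.rightFunc.mapIso ι⟩⟩

lemma hasUniqueLifts_of_isTildeE {L : D ⥤ C} {R : C ⥤ D} (adj : L ⊣ R)
    {fs : FactorisationSystem D} {A B X Y : C} {e : A ⟶ B} {f : X ⟶ Y}
    (he : isTildeE L fs e) (hf : fs.F (R.map f)) : HasUniqueLifts e f :=
  let ⟨_, _, e₀, he₀, ⟨ι⟩⟩ := he
  (HasUniqueLifts.map_of_adjunction adj (fs.orth e₀ _ he₀ hf)).of_arrowIso ι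

def tildeE (L : D ⥤ C) (fs : FactorisationSystem D) : MorphismProperty C :=
  fun _ _ g => isTildeE L fs g

lemma nonempty_mapFactorizationData {L : D ⥤ C} {R : C ⥤ D} (adj : L ⊣ R)
    {fs : FactorisationSystem D}
    (hRL : ∀ {X Y : D} (f : X ⟶ Y), fs.F f → fs.F (R.map (L.map f)))
    (hcounit : ∀ X : C, fs.F (R.map (adj.counit.app X)))
    {X Y : C} (h : X ⟶ Y) (hX : inTildeD L X) :
    Nonempty ((tildeE L fs).MapFactorizationData (fs.F.inverseImage R) h) := by
  obtain ⟨A, ⟨σ⟩⟩ := hX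
  obtain ⟨Z, e, f, he, hf, hef⟩ := fs.fact (adj.homEquiv A Y (σ.hom ≫ h))
  refine ⟨{ Z := L.obj Z
            i := σ.inv ≫ L.map e
            p := L.map f ≫ adj.counit.app Y
            fac := ?_
            hi := ⟨A, Z, e, he, ⟨Arrow.isoMk σ (Iso.refl _)⟩⟩
            hp := ?_ }⟩
  · rw [Category.assoc, ← L.map_comp_assoc, hef, ← adj.homEquiv_counit,
      Equiv.symm_apply_apply, Iso.inv_hom_id_assoc]
  · rw [MorphismProperty.inverseImage_iff, R.map_comp]
    exact fs.F_comp (hRL f hf) (hcounit Y)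

section Coreflection

variable {L : D ⥤ C} {fs : FactorisationSystem D} {F' : MorphismProperty C}
  (fac : ∀ a : DdownC L, (tildeE L fs).MapFactorizationData F' a.obj.hom)

def tildeEPart (a : DdownC L) : ArEt L fs :=
  ⟨Arrow.mk (fac a).i, a.property, inTildeD_of_isTildeE (fac a).hi, (fac a).hi⟩

def tildeEPartCounit (a : DdownC L) : (inclArE L fs).obj (tildeEPart fac a) ⟶ a :=
  ObjectProperty.homMk (Arrow.homMk (𝟙 _) (fac a).p (by simp [inclArE, tildeEPart]))

variable (horth : ∀ ⦃A B X Y : C⦄ (e : A ⟶ B) (f : X ⟶ Y), isTildeE L fs e → F' f →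
  HasUniqueLifts e f)
include horth

lemma existsUnique_map_comp_tildeEPartCounit (x : ArEt L fs) {a : DdownC L}
    (ψ : (inclArE L fs).obj x ⟶ a) :
    ∃! χ : x ⟶ tildeEPart fac a, (inclArE L fs).map χ ≫ tildeEPartCounit fac a = ψ := by
  have sq : (ψ.hom.left ≫ (fac a).i) ≫ (fac a).p = x.obj.hom ≫ ψ.hom.right := by
    rw [Category.assoc, (fac a).fac]; exact ψ.hom.w
  obtain ⟨d, ⟨hd₁, hd₂⟩, hd⟩ := horth _ _ x.property.2.2 (fac a).hp _ _ sq
  refine ⟨ObjectProperty.homMk (Arrow.homMk ψ.hom.left d hd₁.symm), ?_, fun χ hχ => ?_⟩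
  · ext
    · exact Category.comp_id _
    · exact hd₂
  · have hl : χ.hom.left = ψ.hom.left :=
      (Category.comp_id _).symm.trans (congr_arg (·.hom.left) hχ)
    have hr : χ.hom.right ≫ (fac a).p = ψ.hom.right := congr_arg (·.hom.right) hχ
    ext
    · exact hl
    · exact hd _ ⟨χ.hom.w.symm.trans (congrArg (· ≫ (fac a).i) hl), hr⟩

noncomputable def coreflectorHomEquiv (x : ArEt L fs) (a : DdownC L) :
    ((inclArE L fs).obj x ⟶ a) ≃ (x ⟶ tildeEPart fac a) :=
  (Equiv.ofBijective _ ((Function.bijective_iff_existsUnique _).2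
    (existsUnique_map_comp_tildeEPartCounit fac horth x))).symm

lemma map_coreflectorHomEquiv_comp (x : ArEt L fs) {a : DdownC L}
    (g : (inclArE L fs).obj x ⟶ a) :
    (inclArE L fs).map (coreflectorHomEquiv fac horth x a g) ≫ tildeEPartCounit fac a = g :=
  Equiv.ofBijective_apply_symm_apply (fun χ => (inclArE L fs).map χ ≫ tildeEPartCounit fac a) _ g

lemma coreflectorHomEquiv_naturality {x' x : ArEt L fs} {a : DdownC L} (f : x' ⟶ x)
    (g : (inclArE L fs).obj x ⟶ a) :
    coreflectorHomEquiv fac horth x' a ((inclArE L fs).map f ≫ g) =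
      f ≫ coreflectorHomEquiv fac horth x a g := by
  rw [coreflectorHomEquiv, Equiv.symm_apply_eq, Equiv.ofBijective_apply, Functor.map_comp,
    Category.assoc, map_coreflectorHomEquiv_comp]

noncomputable def coreflector : DdownC L ⥤ ArEt L fs :=
  Adjunction.rightAdjointOfEquiv (coreflectorHomEquiv fac horth)
    fun _ _ _ => coreflectorHomEquiv_naturality fac horth

noncomputable def coreflectorAdjunction : inclArE L fs ⊣ coreflector fac horth :=
  Adjunction.adjunctionOfEquivRight _ _

lemma coreflectorAdjunction_counit_app (a : DdownC L) :
    (coreflectorAdjunction fac horth).counit.app a = tildeEPartCounit fac a := by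
  rw [coreflectorAdjunction, Adjunction.adjunctionOfEquivRight_counit_app, coreflectorHomEquiv,
    Equiv.symm_symm, Equiv.ofBijective_apply]
  exact Category.id_comp _

end Coreflection

lemma existsUnique_comp_eq_of_isIso_right {P : ObjectProperty (Arrow C)}
    {a b c : P.FullSubcategory} (φ : a ⟶ b) [IsIso φ.hom.right] (χ : c ⟶ b)
    (g : c.obj.left ⟶ a.obj.left) (hg : g ≫ φ.hom.left = χ.hom.left) :
    ∃! ψ : c ⟶ a, ψ ≫ φ = χ ∧ ψ.hom.left = g := by
  have w : g ≫ a.obj.hom = c.obj.hom ≫ χ.hom.right ≫ inv φ.hom.right := by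
    rw [← Category.assoc, ← Arrow.w χ.hom, ← hg]
    simp only [Category.assoc, Arrow.w_assoc φ.hom, IsIso.hom_inv_id, Category.comp_id]
  refine ⟨ObjectProperty.homMk (Arrow.homMk g (χ.hom.right ≫ inv φ.hom.right) w), ⟨?_, rfl⟩,
    fun ψ ⟨hψ, hψl⟩ => ?_⟩
  · ext
    · exact hg
    · exact (Category.assoc _ _ _).trans (by rw [IsIso.inv_hom_id, Category.comp_id])
  · ext
    · exact hψl
    · exact (IsIso.eq_comp_inv _).2 (congr_arg (·.hom.right) hψ)

lemma isCartesianArrow_map_of_isIso_counit_left {L : D ⥤ C} {fs : FactorisationSystem D}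
    {w : DdownC L ⥤ ArEt L fs} (adj : inclArE L fs ⊣ w)
    (hε : ∀ a, IsIso (adj.counit.app a).hom.left) {a b : DdownC L} (φ : a ⟶ b)
    [IsIso φ.hom.right] : IsCartesianArrow (domProjArE L fs) (w.map φ) := by
  intro c χ g hg
  have hε_nat : (w.map φ).hom.left ≫ (adj.counit.app b).hom.left =
      (adj.counit.app a).hom.left ≫ φ.hom.left :=
    congr_arg (·.hom.left) (adj.counit.naturality φ)
  have hgl : g.hom ≫ (w.map φ).hom.left = χ.hom.left := congr_arg (·.hom) hg
  have hg' : (g.hom ≫ (adj.counit.app a).hom.left) ≫ φ.hom.left =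
      ((adj.homEquiv c b).symm χ).hom.left := by
    rw [adj.homEquiv_counit]
    exact (Category.assoc _ _ _).trans <| (congrArg (g.hom ≫ ·) hε_nat.symm).trans <|
      (Category.assoc _ _ _).symm.trans (congrArg (· ≫ _) hgl)
  refine ((adj.homEquiv c a).symm.existsUnique_congr fun θ => ?_).2
    (existsUnique_comp_eq_of_isIso_right φ _ _ hg')
  rw [← adj.homEquiv_naturality_right_symm, Equiv.apply_eq_iff_eq, adj.homEquiv_counit]
  have := hε a
  exact and_congr_right' <| ObjectProperty.hom_ext_iff.trans
    (cancel_mono (adj.counit.app a).hom.left (g := θ.hom.left)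
      (h := (g.hom : c.obj.left ⟶ (w.obj a).obj.left))).symm

theorem kleisli_coreflection (L : D ⥤ C) (R : C ⥤ D) (adj : L ⊣ R)
    (fs : FactorisationSystem D)
    (hRL : ∀ {X Y : D} (f : X ⟶ Y), fs.F f → fs.F (R.map (L.map f)))
    (hcounit : ∀ X : C, fs.F (R.map (adj.counit.app X))) :
    -- (a) factorisation and orthogonality for maps with domain in `D̃`
    ((∀ {X Y : C} (h : X ⟶ Y), inTildeD L X →
        ∃ (Z : C) (e : X ⟶ Z) (f : Z ⟶ Y),
          isTildeE L fs e ∧ fs.F (R.map f) ∧ e ≫ f = h) ∧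
      (∀ {A B X Y : C} (e : A ⟶ B) (f : X ⟶ Y),
        isTildeE L fs e → fs.F (R.map f) →
        ∀ (u : A ⟶ X) (v : B ⟶ Y), u ≫ f = e ≫ v →
          ∃! d : B ⟶ X, e ≫ d = u ∧ d ≫ f = v)) ∧
    -- (b) the inclusion `Ar^Ẽ(D̃) ↪ D̃↓C` admits a right adjoint sending a morphism to
    -- its `Ẽ`-factor, and (c) this right adjoint preserves cartesian morphisms
    (∃ (w : DdownC L ⥤ ArEt L fs) (adj' : inclArE L fs ⊣ w),
      (∀ a : DdownC L,
        IsIso (CommaMorphism.left (adj'.counit.app a).hom) ∧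
        fs.F (R.map (CommaMorphism.right (adj'.counit.app a).hom))) ∧
      (∀ (a b : DdownC L) (φ : a ⟶ b), IsIso (CommaMorphism.right φ.hom) →
        IsCartesianArrow (domProjArE L fs) (w.map φ))) := by
  have horth : ∀ ⦃A B X Y : C⦄ (e : A ⟶ B) (f : X ⟶ Y), isTildeE L fs e →
      fs.F.inverseImage R f → HasUniqueLifts e f :=
    fun _ _ _ _ _ _ he hf => hasUniqueLifts_of_isTildeE adj he hf
  let fac (a : DdownC L) :=
    (nonempty_mapFactorizationData adj hRL hcounit a.obj.hom a.property).some
  have hcounit_left (a : DdownC L) :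
      IsIso ((coreflectorAdjunction fac horth).counit.app a).hom.left := by
    rw [coreflectorAdjunction_counit_app]
    exact IsIso.id _
  refine ⟨⟨fun {_ _} h hX => ?_, fun e f he hf => horth e f he hf⟩, coreflector fac horth,
    coreflectorAdjunction fac horth, fun a => ⟨hcounit_left a, ?_⟩,
    fun a b φ _ => isCartesianArrow_map_of_isIso_counit_left _ hcounit_left φ⟩
  · obtain ⟨d⟩ := nonempty_mapFactorizationData adj hRL hcounit h hX
    exact ⟨d.Z, d.i, d.p, d.hi, d.hp, d.fac⟩
  · rw [coreflectorAdjunction_counit_app]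
    exact (fac a).hp

end DS3
end

section
/- For X a decomposition space, the counit ε_X : i*u*X → X of the adjunction i* ⊣ u* — the simplicial map whose component in degree n is X(η_n) : X_{n+2} → X_n, where η_n : [n] → [n+2] is the free map sending j to j+1 (the unit of the adjunction i ⊣ u) — is cULF. -/
open CategoryTheory Opposite

namespace DS3

/-! ## The simplex category Δ: generic and free maps, decomposition spaces -/

/-- A morphism of the simplex category is *generic* (endpoint-preserving) if it preserves
the bottom and the top element. -/
def IsGeneric {m n : SimplexCategory} (a : m ⟶ n) : Prop :=
  a.toOrderHom 0 = 0 ∧ a.toOrderHom (Fin.last m.len) = Fin.last n.len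

/-- A morphism of the simplex category is *free* (distance-preserving) if
`a (i+1) = a i + 1`. -/
def IsFree {m n : SimplexCategory} (a : m ⟶ n) : Prop :=
  ∀ i : Fin m.len, (a.toOrderHom i.succ : ℕ) = (a.toOrderHom i.castSucc : ℕ) + 1

/-- A simplicial set is a *decomposition space* if it sends every pushout in `Δ` of a
generic map along a free map to a pullback of sets. -/
def IsDecomposition (X : SimplexCategoryᵒᵖ ⥤ Type) : Prop :=
  ∀ {a b c d : SimplexCategory} (g : a ⟶ b) (f : a ⟶ c) (f' : b ⟶ d) (g' : c ⟶ d),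
    IsGeneric g → IsFree f → IsPushout g f f' g' →
    IsPullback (X.map f'.op) (X.map g'.op) (X.map g.op) (X.map f.op)

/-- A simplicial map is *cULF* if its naturality squares at all generic maps are
pullbacks. -/
def IsCULF {Y X : SimplexCategoryᵒᵖ ⥤ Type} (α : Y ⟶ X) : Prop :=
  ∀ {m n : SimplexCategory} (g : m ⟶ n), IsGeneric g →
    IsPullback (α.app (op n)) (Y.map g.op) (X.map g.op) (α.app (op m))

/-! ## The category Ξ of finite strict intervals -/

/-- Objects of the category `Ξ` of finite strict intervals: `⟨t⟩` stands for the finite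
linear order `Fin (t+2)` with (distinct) bottom element `0` and top element `t+1`.
In the indexing of the paper, `⟨t⟩` is the object `[t-1]`; thus `⟨0⟩ = [-1]`. -/
@[ext] structure IntervalCat : Type where
  /-- the number of non-endpoint elements -/
  len : ℕ

namespace IntervalCat

/-- Morphisms of `Ξ`: order-preserving maps preserving the bottom and the top element. -/
@[ext] structure Hom (a b : IntervalCat) : Type where
  toOrderHom : Fin (a.len + 2) →o Fin (b.len + 2)
  map_bot : toOrderHom 0 = 0
  map_top : toOrderHom (Fin.last (a.len + 1)) = Fin.last (b.len + 1)

instance : Category IntervalCat where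
  Hom := Hom
  id a := ⟨OrderHom.id, rfl, rfl⟩
  comp f g := ⟨g.toOrderHom.comp f.toOrderHom,
    by simp [f.map_bot, g.map_bot], by simp [f.map_top, g.map_top]⟩
  id_comp f := Hom.ext rfl
  comp_id f := Hom.ext rfl
  assoc f g h := Hom.ext rfl

end IntervalCat

/-- The coface map `⟨t⟩ ⟶ ⟨t+1⟩` of `Ξ` skipping the non-endpoint element `i+1`
(for `i ≤ t`; out of this range the index is clamped).  Under a presheaf `A` on `Ξ` it
induces the face map `d_i : A_n → A_{n-1}` (paper indexing `n = t-1`); for `t = i = 0` it is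
the extra outer coface `[-1] → [0]`, inducing `A_0 → A_{-1}`. -/
def xiFace (t i : ℕ) : IntervalCat.mk t ⟶ IntervalCat.mk (t + 1) where
  toOrderHom :=
    { toFun := fun x =>
        ⟨if (x : ℕ) < min (i + 1) (t + 1) then (x : ℕ) else (x : ℕ) + 1, by
          have := x.isLt
          dsimp only at this ⊢
          split <;> omega⟩
      monotone' := by
        intro x y hxy
        have hxy' : (x : ℕ) ≤ (y : ℕ) := hxy
        simp only [Fin.mk_le_mk]
        split <;> split <;> omega }
  map_bot := by
    apply Fin.ext
    simp only [OrderHom.coe_mk, Fin.val_zero]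
    simp
  map_top := by
    apply Fin.ext
    simp only [OrderHom.coe_mk, Fin.val_last]
    split <;> omega

/-- The codegeneracy map `⟨t+1⟩ ⟶ ⟨t⟩` of `Ξ` collapsing the pair `(j, j+1)` onto `j`
(for `j ≤ t+1`; out of this range the index is clamped).  For `j = 0` this is the extra
bottom codegeneracy (inducing `s_{⊥-1} : A_n → A_{n+1}`, paper indexing `n = t-1`), for
`j = t+1` the extra top codegeneracy (inducing `s_{⊤+1}`), and for `1 ≤ j ≤ t` the ordinary
codegeneracy `σ_{j-1}` (inducing `s_{j-1}`). -/
def xiSigma (t j : ℕ) : IntervalCat.mk (t + 1) ⟶ IntervalCat.mk t where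
  toOrderHom :=
    { toFun := fun x =>
        ⟨if (x : ℕ) ≤ min j (t + 1) then (x : ℕ) else (x : ℕ) - 1, by
          have := x.isLt
          dsimp only at this ⊢
          split <;> omega⟩
      monotone' := by
        intro x y hxy
        have hxy' : (x : ℕ) ≤ (y : ℕ) := hxy
        simp only [Fin.mk_le_mk]
        split <;> split <;> omega }
  map_bot := by
    apply Fin.ext
    simp only [OrderHom.coe_mk, Fin.val_zero]
    simp
  map_top := by
    apply Fin.ext
    simp only [OrderHom.coe_mk, Fin.val_last]
    split <;> omega

/-! ## The functors `u : Ξ ⥤ Δ` and `i : Δ ⥤ Ξ` -/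

/-- The forgetful functor `u : Ξ ⥤ Δ`, forgetting that the endpoints are distinguished:
`u ⟨t⟩ = [t+1]`. -/
def uF : IntervalCat ⥤ SimplexCategory where
  obj a := SimplexCategory.mk (a.len + 1)
  map f := SimplexCategory.mkHom f.toOrderHom
  map_id _ := rfl
  map_comp _ _ := rfl

/-- The underlying map of `i f`: extend `f` by a new bottom and a new top element. -/
def iObjMap {m n : ℕ} (f : Fin (m + 1) →o Fin (n + 1)) : Fin (m + 3) →o Fin (n + 3) where
  toFun x :=
    if (x : ℕ) = 0 then 0
    else if h : m + 2 ≤ (x : ℕ) then Fin.last (n + 2)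
    else ⟨(f ⟨(x : ℕ) - 1, by omega⟩ : ℕ) + 1, by
      have := (f ⟨(x : ℕ) - 1, by omega⟩).isLt; omega⟩
  monotone' := by
    intro x y hxy
    have hxy' : (x : ℕ) ≤ (y : ℕ) := hxy
    dsimp only
    by_cases h1 : (x : ℕ) = 0
    · simp only [if_pos h1]
      exact Fin.zero_le _
    · rw [if_neg h1]
      have hy1 : ¬ (y : ℕ) = 0 := by omega
      rw [if_neg hy1]
      by_cases h2 : m + 2 ≤ (x : ℕ)
      · rw [dif_pos h2, dif_pos (by omega : m + 2 ≤ (y : ℕ))]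
      · rw [dif_neg h2]
        by_cases h3 : m + 2 ≤ (y : ℕ)
        · rw [dif_pos h3]
          exact Fin.le_last _
        · rw [dif_neg h3]
          simp only [Fin.mk_le_mk]
          have : (⟨(x : ℕ) - 1, by omega⟩ : Fin (m + 1)) ≤ ⟨(y : ℕ) - 1, by omega⟩ := by
            simp only [Fin.mk_le_mk]; omega
          exact Nat.add_le_add_right (f.monotone this) 1

theorem iObjMap_bot {m n : ℕ} (f : Fin (m + 1) →o Fin (n + 1)) : iObjMap f 0 = 0 := by
  simp [iObjMap]

theorem iObjMap_top {m n : ℕ} (f : Fin (m + 1) →o Fin (n + 1)) :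
    iObjMap f (Fin.last (m + 2)) = Fin.last (n + 2) := by
  simp [iObjMap]

theorem iObjMap_id (m : ℕ) :
    iObjMap (OrderHom.id : Fin (m + 1) →o Fin (m + 1)) = OrderHom.id := by
  apply OrderHom.ext
  funext j
  apply Fin.ext
  have hj := j.isLt
  simp only [iObjMap, OrderHom.coe_mk, OrderHom.id_coe, id_eq]
  split_ifs with h1 h2 <;> simp <;> omega

theorem iObjMap_comp {m p n : ℕ} (f : Fin (m + 1) →o Fin (p + 1))
    (g : Fin (p + 1) →o Fin (n + 1)) :
    iObjMap (g.comp f) = (iObjMap g).comp (iObjMap f) := by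
  apply OrderHom.ext
  funext j
  apply Fin.ext
  have hj := j.isLt
  change ((iObjMap (g.comp f)).toFun j : ℕ) = ((iObjMap g).toFun ((iObjMap f).toFun j) : ℕ)
  simp only [iObjMap, OrderHom.comp_coe, Function.comp_apply]
  by_cases h1 : (j : ℕ) = 0
  · simp [h1]
  · by_cases h2 : m + 2 ≤ (j : ℕ)
    · simp only [if_neg h1, dif_pos h2]
      rw [if_neg (by simp), dif_pos (by simp)]
    · simp only [if_neg h1, dif_neg h2]
      have hb := (f ⟨(j : ℕ) - 1, by omega⟩).isLt
      rw [if_neg (by simp), dif_neg (by simp; omega)]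
      show _ = ((g ⟨(f ⟨(j : ℕ) - 1, by omega⟩ : ℕ) + 1 - 1, by omega⟩ : Fin (n + 1)) : ℕ) + 1
      congr 2

/-- The functor `i : Δ ⥤ Ξ` adjoining a new bottom and a new top element:
`i [n] = ⟨n+1⟩`. -/
def iF : SimplexCategory ⥤ IntervalCat where
  obj x := ⟨x.len + 1⟩
  map f := ⟨iObjMap f.toOrderHom, iObjMap_bot _, iObjMap_top _⟩
  map_id x := IntervalCat.Hom.ext (iObjMap_id x.len)
  map_comp f g := IntervalCat.Hom.ext (iObjMap_comp f.toOrderHom g.toOrderHom)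

/-! ## Presheaves on Ξ -/

/-- Restriction of a simplicial set along `u` (the functor `u*`). -/
def uStar (X : SimplexCategoryᵒᵖ ⥤ Type) : IntervalCatᵒᵖ ⥤ Type := uF.op ⋙ X

/-- Restriction of a presheaf on `Ξ` along `i` (the functor `i*`, taking underlying
simplicial sets). -/
def iStar (A : IntervalCatᵒᵖ ⥤ Type) : SimplexCategoryᵒᵖ ⥤ Type := iF.op ⋙ A

/-- A map of presheaves on `Ξ` is *cartesian* if all its naturality squares are
pullbacks. -/
def IsCartesianXi {A B : IntervalCatᵒᵖ ⥤ Type} (α : A ⟶ B) : Prop :=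
  ∀ ⦃c c' : IntervalCatᵒᵖ⦄ (φ : c ⟶ c'),
    IsPullback (α.app c) (A.map φ) (B.map φ) (α.app c')

/-- A presheaf `A` on `Ξ` is *flanked* if the extra outer degeneracy maps form cartesian
squares with the opposite outer face maps: for all `n ≥ 0` the squares

`A_{n-1} ←d⊤− A_n`         `A_{n-1} ←d⊥− A_n`
`  s⊥↓        ↓s⊥`   and   `  s⊤↓        ↓s⊤`
`A_n  ←d⊤−  A_{n+1}`       `A_n  ←d⊥−  A_{n+1}`

are pullbacks (where `A_n := A(⟨n+1⟩)` in paper degree indexing, `d⊤` is the top face map,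
`d⊥` the bottom face map, and for `n = 0` both are the extra outer face map
`A_0 → A_{-1}`). -/
def Flanked (A : IntervalCatᵒᵖ ⥤ Type) : Prop :=
  ∀ n : ℕ,
    IsPullback (A.map (xiFace n n).op) (A.map (xiSigma (n + 1) 0).op)
      (A.map (xiSigma n 0).op) (A.map (xiFace (n + 1) (n + 1)).op) ∧
    IsPullback (A.map (xiFace n 0).op) (A.map (xiSigma (n + 1) (n + 2)).op)
      (A.map (xiSigma n (n + 1)).op) (A.map (xiFace (n + 1) 0).op)


/-- The free map `η_n : [n] ⟶ [n+2]`, `j ↦ j+1` (the unit of `i ⊣ u`). -/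
def etaDelta (n : ℕ) : SimplexCategory.mk n ⟶ SimplexCategory.mk (n + 2) :=
  SimplexCategory.mkHom
    { toFun := fun j => ⟨(j : ℕ) + 1, by have := j.isLt; omega⟩
      monotone' := by
        intro a b hab
        have : (a : ℕ) ≤ (b : ℕ) := hab
        simp only [Fin.mk_le_mk]
        omega }

theorem etaDelta_natural {x y : SimplexCategory} (f : x ⟶ y) :
    f ≫ etaDelta y.len = etaDelta x.len ≫ uF.map (iF.map f) := by
  apply SimplexCategory.Hom.ext
  apply OrderHom.ext
  funext j
  apply Fin.ext
  have hj := j.isLt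
  show ((f.toOrderHom j : ℕ) + 1)
      = (iObjMap f.toOrderHom ⟨(j : ℕ) + 1, by omega⟩ : ℕ)
  change _ = ((iObjMap f.toOrderHom).toFun _ : ℕ)
  simp only [iObjMap]
  rw [if_neg (by simp), dif_neg (by simp; omega)]
  show _ = (f.toOrderHom ⟨(j : ℕ) + 1 - 1, by omega⟩ : ℕ) + 1
  congr 2

/-- The counit `ε_X : i*u*X ⟶ X` of the adjunction `i* ⊣ u*`: its component in degree `n`
is `X(η_n) : X_{n+2} → X_n`, where `η_n : [n] → [n+2]` is the free map `j ↦ j+1`. -/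
def counitNT (X : SimplexCategoryᵒᵖ ⥤ Type) : iStar (uStar X) ⟶ X where
  app x := X.map (etaDelta x.unop.len).op
  naturality {x y} φ := by
    show X.map _ ≫ X.map _ = X.map _ ≫ X.map φ
    erw [← X.map_comp, ← X.map_comp]
    congr 1
    apply Quiver.Hom.unop_inj
    exact (etaDelta_natural φ.unop).symm

/-! The naturality square of the counit at a generic map `g` is `X` applied to the square
`g ≫ η = η ≫ u (i g)` in `Δ`, which is the pushout of `g` along the free map `η`: a cocone
`(p, q)` is glued into the map that is `p` on the old elements and `q` on the two new endpoints.
Monotonicity of the glued map is exactly where `g` preserving the endpoints is needed. -/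

open Limits

theorem etaDelta_apply (n : ℕ) (j : Fin (n + 1)) :
    (etaDelta n).toOrderHom j = j.castSucc.succ :=
  rfl

theorem etaDelta_free (n : ℕ) : IsFree (etaDelta n) :=
  fun _ => rfl

theorem hom_ext_of_etaDelta {k : ℕ} {T : SimplexCategory}
    {t t' : SimplexCategory.mk (k + 2) ⟶ T}
    (h₀ : t.toOrderHom 0 = t'.toOrderHom 0)
    (hlast : t.toOrderHom (Fin.last (k + 2)) = t'.toOrderHom (Fin.last (k + 2)))
    (hη : etaDelta k ≫ t = etaDelta k ≫ t') : t = t' := by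
  ext x : 3
  induction x using Fin.cases with
  | zero => exact h₀
  | succ y =>
    induction y using Fin.lastCases with
    | last => exact hlast
    | cast z =>
      simpa only [SimplexCategory.comp_toOrderHom, OrderHom.comp_coe, Function.comp_apply,
        etaDelta_apply] using congrArg (fun f => f.toOrderHom z) hη

def extendEnds {n : ℕ} {T : SimplexCategory} (f : SimplexCategory.mk n ⟶ T)
    (a b : Fin (T.len + 1)) (ha : a ≤ f.toOrderHom 0) (hb : f.toOrderHom (Fin.last n) ≤ b) :
    SimplexCategory.mk (n + 2) ⟶ T :=
  SimplexCategory.mkHom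
    { toFun := Fin.cons (α := fun _ => Fin (T.len + 1)) a (Fin.snoc f.toOrderHom b)
      monotone' := by
        rw [← Fin.insertNth_zero', ← Fin.insertNth_last']
        refine Fin.insertNth_zero_monotone
          (Fin.insertNth_last_monotone f.toOrderHom.monotone b hb) a ?_
        rwa [Fin.insertNth_last', ← Fin.castSucc_zero, Fin.snoc_castSucc] }

section extendEnds

variable {n : ℕ} {T : SimplexCategory} (f : SimplexCategory.mk n ⟶ T)
  (a b : Fin (T.len + 1)) (ha : a ≤ f.toOrderHom 0) (hb : f.toOrderHom (Fin.last n) ≤ b)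

theorem extendEnds_zero : (extendEnds f a b ha hb).toOrderHom 0 = a :=
  rfl

theorem extendEnds_last : (extendEnds f a b ha hb).toOrderHom (Fin.last (n + 2)) = b := by
  change Fin.cons (α := fun _ => Fin (T.len + 1)) a (Fin.snoc f.toOrderHom b)
    (Fin.last (n + 1)).succ = b
  rw [Fin.cons_succ, Fin.snoc_last]

theorem etaDelta_comp_extendEnds : etaDelta n ≫ extendEnds f a b ha hb = f := by
  ext j : 3
  change Fin.cons (α := fun _ => Fin (T.len + 1)) a (Fin.snoc f.toOrderHom b)
    j.castSucc.succ = f.toOrderHom j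
  rw [Fin.cons_succ, Fin.snoc_castSucc]

end extendEnds

section CommSq

variable {m n : SimplexCategory} {g : m ⟶ n} {T : SimplexCategory}
  {p : n ⟶ T} {q : SimplexCategory.mk (m.len + 2) ⟶ T}

theorem apply_zero_le_of_comp_etaDelta (hg : IsGeneric g) (h : g ≫ p = etaDelta m.len ≫ q) :
    q.toOrderHom 0 ≤ p.toOrderHom 0 := by
  have h₀ := congrArg (fun f => f.toOrderHom 0) h
  simp only [SimplexCategory.comp_toOrderHom, OrderHom.comp_coe, Function.comp_apply,
    hg.1] at h₀
  exact h₀ ▸ q.toOrderHom.monotone (Fin.zero_le _)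

theorem apply_last_le_of_comp_etaDelta (hg : IsGeneric g) (h : g ≫ p = etaDelta m.len ≫ q) :
    p.toOrderHom (Fin.last n.len) ≤ q.toOrderHom (Fin.last (m.len + 2)) := by
  have hlast := congrArg (fun f => f.toOrderHom (Fin.last m.len)) h
  simp only [SimplexCategory.comp_toOrderHom, OrderHom.comp_coe, Function.comp_apply,
    hg.2] at hlast
  exact hlast ▸ q.toOrderHom.monotone (Fin.le_last _)

end CommSq

theorem isPushout_etaDelta {m n : SimplexCategory} (g : m ⟶ n) (hg : IsGeneric g) :
    IsPushout g (etaDelta m.len) (etaDelta n.len) (uF.map (iF.map g)) := by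
  have w := etaDelta_natural g
  let desc (s : PushoutCocone g (etaDelta m.len)) : SimplexCategory.mk (n.len + 2) ⟶ s.pt :=
    extendEnds s.inl (s.inr.toOrderHom 0) (s.inr.toOrderHom (Fin.last _))
      (apply_zero_le_of_comp_etaDelta hg s.condition)
      (apply_last_le_of_comp_etaDelta hg s.condition)
  have fac_inl (s) : etaDelta n.len ≫ desc s = s.inl := etaDelta_comp_extendEnds ..
  refine IsPushout.of_isColimit' ⟨w⟩ (PushoutCocone.IsColimit.mk w desc fac_inl ?_ ?_)
  · intro s
    apply hom_ext_of_etaDelta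
    · exact congrArg (desc s).toOrderHom (iObjMap_bot g.toOrderHom) |>.trans (extendEnds_zero ..)
    · exact congrArg (desc s).toOrderHom (iObjMap_top g.toOrderHom) |>.trans (extendEnds_last ..)
    · exact ((reassoc_of% w) (desc s)).symm.trans ((fac_inl s).symm ▸ s.condition)
  · intro s t ht_inl ht_inr
    apply hom_ext_of_etaDelta
    · rw [extendEnds_zero, ← ht_inr]
      exact congrArg t.toOrderHom (iObjMap_bot g.toOrderHom).symm
    · rw [extendEnds_last, ← ht_inr]
      exact congrArg t.toOrderHom (iObjMap_top g.toOrderHom).symm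
    · rw [ht_inl, fac_inl]

/-- for `X` a decomposition space, the counit `ε_X : i*u*X ⟶ X` is cULF. -/
theorem counit_cULF (X : SimplexCategoryᵒᵖ ⥤ Type) (hX : IsDecomposition X) :
    IsCULF (counitNT X) :=
  fun g hg => hX g _ _ _ hg (etaDelta_free _) (isPushout_etaDelta g hg)

end DS3
end
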